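/- arXiv:2212.10903 — 6 statements merged into one kernel-verified Lean document; each statement's English description precedes it below -/
import Mathlib

section
/- For every j ∈ {1,…,ℓ} and every m = (m₁,…,m_ℓ) ∈ ℕ^ℓ with m_i = 0 for all i > j, it holds that h(A^m · A_j) = ((1 − q^{2(j+|m|)})/(1 − q^{2(N+|m|)})) · h(A^m). -/
/-!
Write `t = q²`, `s = |m|` and `M = A^m`. Since every factor of `M` only involves `z_i` with
`i ≤ j`, the generator `z_{k+1}*` (for `k ≥ j`) `t`-commutes with each `A_i` in `M`, so
`z_{k+1}* M = t^s M z_{k+1}*`. Moving `z_{k+1}*` around `h` by the modular relation, and then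
through `M`, turns `h(M z_{k+1} z_{k+1}*)` into `t^{k+s} h(M z_{k+1}* z_{k+1})`; the sphere relation
rewrites `z_{k+1}* z_{k+1}` as `z_{k+1} z_{k+1}* + (1 - t) A_k`. Solving gives
`(1 - t^{k+s}) h(M A_{k+1}) = (1 - t^{k+s+1}) h(M A_k)`, so `h(M A_k) / (1 - t^{k+s})` is
constant for `j ≤ k ≤ N`, and `A_N = 1`.
-/

noncomputable section

/-- The partial sum `A_j = Σ_{i=1}^{j} z_i z_i*` (indices of `z` shifted to start at `0`). -/
def Apart {A : Type*} [Ring A] [StarRing A] {N : ℕ} (z : Fin N → A) (j : ℕ) : A :=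
  ∑ i ∈ Finset.univ.filter (fun i : Fin N => (i : ℕ) < j), z i * star (z i)

/-- The ordered monomial `A^m = A₁^{m₁} ⋯ A_ℓ^{m_ℓ}`. -/
def Apow {A : Type*} [Ring A] [StarRing A] {ℓ : ℕ} (z : Fin (ℓ + 1) → A) (m : Fin ℓ → ℕ) : A :=
  ((List.finRange ℓ).map (fun k : Fin ℓ => Apart z ((k : ℕ) + 1) ^ m k)).prod

theorem pow_ne_one_of_norm_lt_one {𝕜 : Type*} [NormedRing 𝕜] [NormOneClass 𝕜] [NormMulClass 𝕜]
    {x : 𝕜} (hx : ‖x‖ < 1) {n : ℕ} (hn : n ≠ 0) : x ^ n ≠ 1 := by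
  intro h
  have : ‖x‖ ^ n < 1 := pow_lt_one₀ (norm_nonneg x) hx hn
  rw [← norm_pow, h, norm_one] at this
  exact lt_irrefl 1 this

theorem mul_eq_mul_of_mul_succ_eq {K : Type*} [CommRing K] [IsDomain K] (f g : ℕ → K)
    {a b : ℕ} (hab : a ≤ b) (hg : ∀ k, a ≤ k → k < b → g k ≠ 0)
    (hstep : ∀ k, a ≤ k → k < b → g k * f (k + 1) = g (k + 1) * f k) :
    g a * f b = g b * f a := by
  induction b, hab using Nat.le_induction with
  | base => ring
  | succ b hab ih =>
    have ih := ih (fun k hk hkb => hg k hk (by omega)) (fun k hk hkb => hstep k hk (by omega))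
    refine mul_left_cancel₀ (hg b hab (by omega)) ?_
    linear_combination g a * hstep b hab (by omega) + g (b + 1) * ih

section SkewCommute

variable {R A : Type*} [CommSemiring R] [Semiring A] [Algebra R A] {a : A}

theorem mul_pow_eq_smul_pow_mul {b : A} {c : R} (h : a * b = c • (b * a)) (n : ℕ) :
    a * b ^ n = c ^ n • (b ^ n * a) := by
  induction n with
  | zero => simp
  | succ n ih =>
    rw [pow_succ, ← mul_assoc, ih, smul_mul_assoc, mul_assoc, h, mul_smul_comm, smul_smul,
      ← mul_assoc, pow_succ]

theorem mul_list_prod_eq_smul {ι : Type*} (f : ι → A) (c : ι → R) (L : List ι)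
    (h : ∀ i ∈ L, a * f i = c i • (f i * a)) :
    a * (L.map f).prod = (L.map c).prod • ((L.map f).prod * a) := by
  induction L with
  | nil => simp
  | cons i L ih =>
    rw [List.map_cons, List.prod_cons, ← mul_assoc, h i List.mem_cons_self, smul_mul_assoc,
      mul_assoc, ih fun k hk => h k (List.mem_cons_of_mem i hk), mul_smul_comm, smul_smul,
      ← mul_assoc, List.map_cons, List.prod_cons]

end SkewCommute

section Apart

variable {A : Type*} [Ring A] [StarRing A] {N : ℕ} (z : Fin N → A)

theorem Apart_succ (k : Fin N) : Apart z (k + 1) = Apart z k + z k * star (z k) := by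
  have hset : Finset.univ.filter (fun i : Fin N => (i : ℕ) < k + 1)
      = insert k (Finset.univ.filter (fun i : Fin N => (i : ℕ) < k)) := by
    ext i
    simp only [Finset.mem_filter, Finset.mem_insert, Finset.mem_univ, true_and, Fin.ext_iff,
      Nat.lt_succ_iff_lt_or_eq]
    tauto
  rw [Apart, Apart, hset, Finset.sum_insert (by simp), add_comm]

theorem Apart_self : Apart z N = ∑ i, z i * star (z i) := by
  simp [Apart]

end Apart

section Sphere

variable {A : Type*} [Ring A] [Algebra ℂ A] [StarRing A] [StarModule ℂ A] {q : ℝ}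
  {N : ℕ} {z : Fin N → A}
  (hcomm : ∀ i j : Fin N, i < j → z i * z j = (q : ℂ) • (z j * z i))
  (hstar : ∀ i j : Fin N, i ≠ j → star (z i) * z j = (q : ℂ) • (z j * star (z i)))
include hcomm hstar

theorem star_mul_mul_star_of_lt {i k : Fin N} (hik : i < k) :
    star (z k) * (z i * star (z i)) = ((q : ℂ) ^ 2) • (z i * star (z i) * star (z k)) := by
  have hss : star (z k) * star (z i) = (q : ℂ) • (star (z i) * star (z k)) := by
    simpa [star_mul, star_smul] using congrArg star (hcomm i k hik)
  rw [← mul_assoc, hstar k i hik.ne', smul_mul_assoc, mul_assoc, hss, mul_smul_comm, smul_smul,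
    ← sq, ← mul_assoc]

theorem star_mul_Apart {n : ℕ} {k : Fin N} (hnk : n ≤ k) :
    star (z k) * Apart z n = ((q : ℂ) ^ 2) • (Apart z n * star (z k)) := by
  rw [Apart, Finset.mul_sum, Finset.sum_mul, Finset.smul_sum]
  refine Finset.sum_congr rfl fun i hi => star_mul_mul_star_of_lt hcomm hstar ?_
  exact Fin.lt_def.2 (by simp only [Finset.mem_filter] at hi; omega)

end Sphere

theorem star_mul_self_succ_eq {A : Type*} [Ring A] [Algebra ℂ A] [StarRing A] {q : ℝ}
    {ℓ : ℕ} {z : Fin (ℓ + 1) → A}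
    (hrel : ∀ j : Fin ℓ,
      star (z j.succ) * z j.succ - z j.succ * star (z j.succ)
        = (1 - (q : ℂ) ^ 2) •
            ∑ i ∈ Finset.univ.filter (fun i : Fin (ℓ + 1) => (i : ℕ) ≤ (j : ℕ)),
              z i * star (z i))
    (j : Fin ℓ) :
    star (z j.succ) * z j.succ
      = z j.succ * star (z j.succ) + (1 - (q : ℂ) ^ 2) • Apart z j.succ := by
  rw [← sub_eq_iff_eq_add', hrel, Apart, Fin.val_succ]
  simp only [Nat.lt_succ_iff]

theorem star_mul_Apow {A : Type*} [Ring A] [Algebra ℂ A] [StarRing A] [StarModule ℂ A] {q : ℝ}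
    {ℓ : ℕ} {z : Fin (ℓ + 1) → A}
    (hcomm : ∀ i j : Fin (ℓ + 1), i < j → z i * z j = (q : ℂ) • (z j * z i))
    (hstar : ∀ i j : Fin (ℓ + 1), i ≠ j → star (z i) * z j = (q : ℂ) • (z j * star (z i)))
    {m : Fin ℓ → ℕ} {k : Fin (ℓ + 1)} (hm : ∀ i : Fin ℓ, (k : ℕ) ≤ i → m i = 0) :
    star (z k) * Apow z m = ((q : ℂ) ^ 2) ^ (∑ i, m i) • (Apow z m * star (z k)) := by
  rw [Apow, ← Finset.prod_pow_eq_pow_sum, Fin.prod_univ_def]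
  refine mul_list_prod_eq_smul _ _ _ fun i _ => ?_
  by_cases hik : (i : ℕ) + 1 ≤ k
  · exact mul_pow_eq_smul_pow_mul (star_mul_Apart hcomm hstar hik) _
  · simp [hm i (by omega)]

theorem haar_mul_Apart_succ {A : Type*} [Ring A] [Algebra ℂ A] [StarRing A] {N : ℕ}
    {z : Fin N → A} (h : A →ₗ[ℂ] ℂ) {k : Fin N} {M : A} {t u v : ℂ}
    (hmod : ∀ x, h (x * star (z k)) = u * h (star (z k) * x))
    (hM : star (z k) * M = v • (M * star (z k)))
    (hrel : star (z k) * z k = z k * star (z k) + (1 - t) • Apart z k) :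
    (1 - u * v) * h (M * Apart z (k + 1)) = (1 - u * v * t) * h (M * Apart z k) := by
  have hcycle : h (M * (z k * star (z k)))
      = u * v * ((1 - t) * h (M * Apart z k) + h (M * (z k * star (z k)))) := by
    calc h (M * (z k * star (z k))) = u * h (star (z k) * M * z k) := by
          rw [← mul_assoc, hmod, mul_assoc]
      _ = u * v * h (M * (star (z k) * z k)) := by
          rw [hM, smul_mul_assoc, map_smul, smul_eq_mul, mul_assoc, mul_assoc]
      _ = _ := by
          rw [hrel, mul_add, mul_smul_comm, map_add, map_smul, smul_eq_mul, add_comm]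
  rw [Apart_succ, mul_add, map_add]
  linear_combination hcycle

theorem haar_apply_Apow_mul_Apart_general
    {A : Type*} [Ring A] [Algebra ℂ A] [StarRing A] [StarModule ℂ A]
    (q : ℝ) (hq : q ∈ Set.Ioo (0 : ℝ) 1) (ℓ : ℕ)
    (z : Fin (ℓ + 1) → A)
    (hcomm : ∀ i j : Fin (ℓ + 1), i < j → z i * z j = (q : ℂ) • (z j * z i))
    (hstar : ∀ i j : Fin (ℓ + 1), i ≠ j → star (z i) * z j = (q : ℂ) • (z j * star (z i)))
    (hrel : ∀ j : Fin ℓ,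
      star (z j.succ) * z j.succ - z j.succ * star (z j.succ)
        = (1 - (q : ℂ) ^ 2) •
            ∑ i ∈ Finset.univ.filter (fun i : Fin (ℓ + 1) => (i : ℕ) ≤ (j : ℕ)),
              z i * star (z i))
    (hsum : ∑ i : Fin (ℓ + 1), z i * star (z i) = 1)
    (h : A →ₗ[ℂ] ℂ)
    (hmodstar : ∀ (x : A) (j : Fin (ℓ + 1)),
      h (star (z j) * x) = ((q : ℂ) ^ (2 * (j : ℕ)))⁻¹ * h (x * star (z j)))
    (j : ℕ) (hj1 : 1 ≤ j) (hjℓ : j ≤ ℓ) (m : Fin ℓ → ℕ)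
    (hm : ∀ i : Fin ℓ, j ≤ (i : ℕ) → m i = 0) :
    h (Apow z m * Apart z j)
      = ((1 - (q : ℂ) ^ (2 * (j + ∑ i, m i)))
          / (1 - (q : ℂ) ^ (2 * ((ℓ + 1) + ∑ i, m i)))) * h (Apow z m) := by
  set t : ℂ := (q : ℂ) ^ 2
  set s := ∑ i, m i
  have ht : ‖t‖ < 1 := by
    rw [norm_pow, Complex.norm_real, Real.norm_of_nonneg hq.1.le]
    nlinarith [hq.1, hq.2]
  have hg : ∀ n, n ≠ 0 → 1 - t ^ n ≠ 0 := fun n hn =>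
    sub_ne_zero.2 (pow_ne_one_of_norm_lt_one ht hn).symm
  have key := mul_eq_mul_of_mul_succ_eq (fun n => h (Apow z m * Apart z n))
    (fun n => 1 - t ^ (n + s)) (by omega : j ≤ ℓ + 1) (fun n hn _ => hg _ (by omega))
    (fun n hjn hn => ?_)
  · simp only [Apart_self, hsum, mul_one] at key
    rw [pow_mul, pow_mul, div_mul_eq_mul_div, eq_div_iff (hg _ (by omega))]
    linear_combination -key
  · obtain ⟨k, rfl⟩ : ∃ k, n = k + 1 := Nat.exists_eq_succ_of_ne_zero (by omega)
    have hmod : ∀ x, h (x * star (z (Fin.succ ⟨k, by omega⟩)))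
        = t ^ (k + 1) * h (star (z (Fin.succ ⟨k, by omega⟩)) * x) := fun x => by
      rw [hmodstar, ← mul_assoc, ← pow_mul, Fin.val_succ, mul_inv_cancel₀ (by simp [hq.1.ne']),
        one_mul]
    have := haar_mul_Apart_succ h hmod (star_mul_Apow hcomm hstar fun i hi => hm i (by
      simp only [Fin.val_succ] at hi; omega)) (star_mul_self_succ_eq hrel ⟨k, by omega⟩)
    simp only [Fin.val_succ] at this
    linear_combination this

/-- Let `z₁,…,z_N` satisfy the quantum sphere relations in a unital
`ℂ`-`*`-algebra and let `h` be a normalized linear functional satisfying the modular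
relations for the Haar state of `SU_q(N)`. Then for every `j ∈ {1,…,ℓ}` and every
`m ∈ ℕ^ℓ` with `m_i = 0` for `i > j` one has
`h(A^m A_j) = (1 − q^{2(j+|m|)})/(1 − q^{2(N+|m|)}) · h(A^m)`.
(The indices of `z` and `m` are shifted to start at `0`.) -/
theorem haar_apply_Apow_mul_Apart
    {A : Type*} [Ring A] [Algebra ℂ A] [StarRing A] [StarModule ℂ A]
    (q : ℝ) (hq : q ∈ Set.Ioo (0 : ℝ) 1) (ℓ : ℕ) (hℓ : 1 ≤ ℓ)
    (z : Fin (ℓ + 1) → A)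
    (hcomm : ∀ i j : Fin (ℓ + 1), i < j → z i * z j = (q : ℂ) • (z j * z i))
    (hstar : ∀ i j : Fin (ℓ + 1), i ≠ j → star (z i) * z j = (q : ℂ) • (z j * star (z i)))
    (hrel : ∀ j : Fin ℓ,
      star (z j.succ) * z j.succ - z j.succ * star (z j.succ)
        = (1 - (q : ℂ) ^ 2) •
            ∑ i ∈ Finset.univ.filter (fun i : Fin (ℓ + 1) => (i : ℕ) ≤ (j : ℕ)),
              z i * star (z i))
    (hz0 : star (z 0) * z 0 = z 0 * star (z 0))
    (hsum : ∑ i : Fin (ℓ + 1), z i * star (z i) = 1)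
    (h : A →ₗ[ℂ] ℂ) (h1 : h 1 = 1)
    (hmod : ∀ (x : A) (j : Fin (ℓ + 1)),
      h (z j * x) = (q : ℂ) ^ (2 * (j : ℕ)) * h (x * z j))
    (hmodstar : ∀ (x : A) (j : Fin (ℓ + 1)),
      h (star (z j) * x) = ((q : ℂ) ^ (2 * (j : ℕ)))⁻¹ * h (x * star (z j)))
    (j : ℕ) (hj1 : 1 ≤ j) (hjℓ : j ≤ ℓ) (m : Fin ℓ → ℕ)
    (hm : ∀ i : Fin ℓ, j ≤ (i : ℕ) → m i = 0) :
    h (Apow z m * Apart z j)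
      = ((1 - (q : ℂ) ^ (2 * (j + ∑ i, m i)))
          / (1 - (q : ℂ) ^ (2 * ((ℓ + 1) + ∑ i, m i)))) * h (Apow z m) :=
  haar_apply_Apow_mul_Apart_general q hq ℓ z hcomm hstar hrel hsum h hmodstar j hj1 hjℓ m hm

end
end

section
/- For every q ∈ (0,1), every integer ℓ ≥ 1 with N := ℓ + 1, and every m = (m₁,…,m_ℓ) ∈ ℕ^ℓ, the family indexed by n = (n₁,…,n_ℓ) ∈ ℕ^ℓ with terms ∏_{k=1}^{ℓ} (1 − q^{2k}) · q^{2(N−k)n_k} · q^{2 n_k Σ_{i=1}^{N−k} m_i} is summable, and its sum equals ∏_{k=1}^{ℓ} (1 − q^{2k})/(1 − q^{2(k + Σ_{i=1}^{k} m_i)}). -/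
/-! The integrand factors over `k`: its `k`-th factor is `(1 - q^{2k})` times a geometric series in
`n_k` with ratio `q^{2(N-k+Σ_{i≤N-k} m_i)}`. Over `ℝ` summable families are absolutely summable, so
the sum over `ℕ^ℓ` is the product of the `ℓ` geometric sums, and the reversal `k ↦ N - k` turns
their denominators into the stated ones. -/

open Finset

theorem HasSum.mul_of_rclike {𝕜 ι κ : Type*} [RCLike 𝕜] {f : ι → 𝕜} {g : κ → 𝕜} {s t : 𝕜}
    (hf : HasSum f s) (hg : HasSum g t) :
    HasSum (fun x : ι × κ => f x.1 * g x.2) (s * t) :=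
  hf.mul hg <| summable_mul_of_summable_norm (summable_norm_iff.2 hf.summable)
    (summable_norm_iff.2 hg.summable)

theorem hasSum_pi_prod {𝕜 β : Type*} [RCLike 𝕜] :
    ∀ {d : ℕ} {f : Fin d → β → 𝕜} {a : Fin d → 𝕜}, (∀ k, HasSum (f k) (a k)) →
      HasSum (fun v : Fin d → β => ∏ k, f k (v k)) (∏ k, a k)
  | 0, f, a, _ => by simp
  | d + 1, f, a, h => by
    have hsplit := (h 0).mul_of_rclike (hasSum_pi_prod fun k : Fin d => h k.succ)
    rw [Fin.prod_univ_succ, ← (Fin.consEquiv fun _ => β).hasSum_iff]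
    simpa only [Fin.prod_univ_succ, Fin.consEquiv, Equiv.coe_fn_mk, Function.comp_def,
      Fin.cons_zero, Fin.cons_succ] using hsplit

theorem Fin.val_rev_add_one {n : ℕ} (k : Fin n) : (k.rev : ℕ) + 1 = n - k := by
  rw [Fin.val_rev]; omega

theorem hasSum_haar_integrand_general (q : ℝ) (hq : q ∈ Set.Ioo (0 : ℝ) 1)
    (ℓ : ℕ) (m : Fin ℓ → ℕ) :
    HasSum
      (fun n : Fin ℓ → ℕ => ∏ k : Fin ℓ,
        (1 - q ^ (2 * ((k : ℕ) + 1))) * q ^ (2 * (ℓ - (k : ℕ)) * n k) *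
          q ^ (2 * n k *
            ∑ i ∈ Finset.univ.filter (fun i : Fin ℓ => (i : ℕ) < ℓ - (k : ℕ)), m i))
      (∏ k : Fin ℓ,
        (1 - q ^ (2 * ((k : ℕ) + 1))) /
          (1 - q ^ (2 * ((k : ℕ) + 1
              + ∑ i ∈ Finset.univ.filter (fun i : Fin ℓ => (i : ℕ) ≤ (k : ℕ)), m i)))) := by
  set S : Fin ℓ → ℕ := fun k => ∑ i ∈ univ.filter (fun i : Fin ℓ => (i : ℕ) < ℓ - k), m i
  have hfactor (k : Fin ℓ) : HasSum
      (fun n => (1 - q ^ (2 * ((k : ℕ) + 1))) * q ^ (2 * (ℓ - (k : ℕ)) * n) * q ^ (2 * n * S k))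
      ((1 - q ^ (2 * ((k : ℕ) + 1))) / (1 - q ^ (2 * (ℓ - k + S k)))) := by
    have hr : q ^ (2 * (ℓ - k + S k)) < 1 := pow_lt_one₀ hq.1.le hq.2 (by omega)
    have hgeom := (hasSum_geometric_of_lt_one (pow_nonneg hq.1.le _) hr).mul_left
      (1 - q ^ (2 * ((k : ℕ) + 1)))
    rw [div_eq_mul_inv]
    refine hgeom.congr_fun fun n => ?_
    rw [mul_assoc, ← pow_add, ← pow_mul]
    ring_nf
  have hden : ∏ k : Fin ℓ, (1 - q ^ (2 * ((k : ℕ) + 1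
        + ∑ i ∈ univ.filter (fun i : Fin ℓ => (i : ℕ) ≤ (k : ℕ)), m i)))
      = ∏ k : Fin ℓ, (1 - q ^ (2 * (ℓ - k + S k))) := by
    refine (Fintype.prod_equiv Fin.revPerm _ _ fun k => ?_).symm
    have hS : S k = ∑ i ∈ univ.filter (fun i : Fin ℓ => (i : ℕ) ≤ k.rev), m i :=
      sum_congr (filter_congr fun i _ => by rw [← Fin.val_rev_add_one]; omega) fun _ _ => rfl
    rw [Fin.revPerm_apply, hS, Fin.val_rev_add_one]
  rw [prod_div_distrib, hden, ← prod_div_distrib]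
  -- elaborating without the expected type avoids unifying `RCLike ℝ` instances by unfolding
  exact (hasSum_pi_prod hfactor :)

/-- For `q ∈ (0,1)`, `ℓ ≥ 1`, `N = ℓ + 1` and `m ∈ ℕ^ℓ`, the family
indexed by `n ∈ ℕ^ℓ` with terms
`∏_{k=1}^{ℓ} (1 − q^{2k}) q^{2(N−k)n_k} q^{2 n_k Σ_{i=1}^{N−k} m_i}`
is summable with sum `∏_{k=1}^{ℓ} (1 − q^{2k})/(1 − q^{2(k + Σ_{i=1}^{k} m_i)})`.
(The indices `k`, `i` of `n` and `m` are shifted to start at `0`.) -/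
theorem hasSum_haar_integrand (q : ℝ) (hq : q ∈ Set.Ioo (0 : ℝ) 1)
    (ℓ : ℕ) (hℓ : 1 ≤ ℓ) (m : Fin ℓ → ℕ) :
    HasSum
      (fun n : Fin ℓ → ℕ => ∏ k : Fin ℓ,
        (1 - q ^ (2 * ((k : ℕ) + 1))) * q ^ (2 * (ℓ - (k : ℕ)) * n k) *
          q ^ (2 * n k *
            ∑ i ∈ Finset.univ.filter (fun i : Fin ℓ => (i : ℕ) < ℓ - (k : ℕ)), m i))
      (∏ k : Fin ℓ,
        (1 - q ^ (2 * ((k : ℕ) + 1))) /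
          (1 - q ^ (2 * ((k : ℕ) + 1
              + ∑ i ∈ Finset.univ.filter (fun i : Fin ℓ => (i : ℕ) ≤ (k : ℕ)), m i)))) :=
  hasSum_haar_integrand_general q hq ℓ m
end

section
/- For every integer ℓ ≥ 1 and every m = (m₁,…,m_ℓ) ∈ ℕ^ℓ, the Lebesgue integral over the standard ℓ-simplex Ω := {t = (t₁,…,t_ℓ) ∈ ℝ^ℓ : t_i ≥ 0 for all i, and Σ_{i=1}^{ℓ} t_i ≤ 1} of the function t ↦ ∏_{k=1}^{ℓ} (Σ_{i=1}^{k} t_i)^{m_k} equals ∏_{k=1}^{ℓ} (k + Σ_{i=1}^{k} m_i)^{−1}. -/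
/-!
Replacing the last coordinate of `t ∈ ℝ^(n+1)` by the total sum `v = t₁ + ⋯ + t_{n+1}` is a
shear, hence volume preserving, and it fibres the simplex `Ω_{n+1}` over `v ∈ [0, 1]` with fibre
the scaled simplex `v • Ω_n`. On that fibre the last factor of the integrand is the constant
`v ^ m_{n+1}`, and the other factors form the monomial of `m' = (m₁, …, m_n)`, which is homogeneous
of degree `|m'|`, so its integral over `v • Ω_n` is `v ^ (n + |m'|)` times its integral over `Ω_n`.
Hence, writing `|m| = m₁ + ⋯ + m_{n+1}`,
`I(m) = I(m') ∫₀¹ v ^ (n + |m|) dv = I(m') / (n + 1 + |m|)`, and induction on `n` gives the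
product formula.
-/

open MeasureTheory Finset Set
open scoped Pointwise

namespace SimplexIntegral

variable {n : ℕ}

def simplex (n : ℕ) (s : ℝ) : Set (Fin n → ℝ) := {t | (∀ i, 0 ≤ t i) ∧ ∑ i, t i ≤ s}

def partialSum (t : Fin n → ℝ) (k : Fin n) : ℝ := ∑ i ∈ univ.filter (fun i => i ≤ k), t i

def monomial (m : Fin n → ℕ) (t : Fin n → ℝ) : ℝ := ∏ k, partialSum t k ^ m k

lemma isCompact_simplex (n : ℕ) (s : ℝ) : IsCompact (simplex n s) := by
  refine (isCompact_Icc (a := (0 : Fin n → ℝ)) (b := fun _ => s)).of_isClosed_subset ?_ ?_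
  · exact isClosed_Ici.inter
      (isClosed_le (continuous_finsetSum _ fun i _ => continuous_apply i) continuous_const)
  · rintro t ⟨ht₀, hts⟩
    exact ⟨ht₀, fun i => (single_le_sum (fun j _ => ht₀ j) (mem_univ i)).trans hts⟩

lemma measurableSet_simplex (n : ℕ) (s : ℝ) : MeasurableSet (simplex n s) :=
  (isCompact_simplex n s).isClosed.measurableSet

lemma simplex_eq_empty_of_neg {s : ℝ} (hs : s < 0) : simplex n s = ∅ :=
  eq_empty_of_forall_notMem fun _ ⟨ht₀, hts⟩ =>
    (sum_nonneg fun i _ => ht₀ i).not_gt (hts.trans_lt hs)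

lemma smul_simplex {s : ℝ} (hs : 0 < s) : s • simplex n 1 = simplex n s := by
  ext t
  rw [mem_smul_set_iff_inv_smul_mem₀ hs.ne']
  refine and_congr (forall_congr' fun i => ?_) ?_
  · exact mul_nonneg_iff_of_pos_left (inv_pos.2 hs)
  · simp only [Pi.smul_apply, smul_eq_mul, ← mul_sum, inv_mul_le_iff₀ hs, mul_one]

lemma continuous_monomial (m : Fin n → ℕ) : Continuous (monomial m) :=
  continuous_finsetProd _ fun k _ =>
    (continuous_finsetSum _ fun i _ => continuous_apply i).pow (m k)

lemma integrableOn_monomial_simplex (m : Fin n → ℕ) (s : ℝ) :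
    IntegrableOn (monomial m) (simplex n s) :=
  (continuous_monomial m).continuousOn.integrableOn_compact (isCompact_simplex n s)

lemma monomial_smul (m : Fin n → ℕ) (c : ℝ) (t : Fin n → ℝ) :
    monomial m (c • t) = c ^ (∑ k, m k) * monomial m t := by
  simp only [monomial, partialSum, Pi.smul_apply, smul_eq_mul, ← mul_sum, mul_pow,
    prod_mul_distrib, prod_pow_eq_pow_sum]

lemma partialSum_castSucc (t : Fin (n + 1) → ℝ) (k : Fin n) :
    partialSum t k.castSucc = partialSum (Fin.init t) k := by
  simp [partialSum, sum_filter, Fin.sum_univ_castSucc, Fin.init, (Fin.castSucc_lt_last k).not_ge]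

lemma partialSum_last (t : Fin (n + 1) → ℝ) : partialSum t (Fin.last n) = ∑ i, t i := by
  simp [partialSum, Fin.le_last]

lemma monomial_snoc (m : Fin (n + 1) → ℕ) (t : Fin n → ℝ) (y : ℝ) :
    monomial m (Fin.snoc t y) = monomial (Fin.init m) t * (∑ i, t i + y) ^ m (Fin.last n) := by
  rw [monomial, Fin.prod_univ_castSucc, partialSum_last, Fin.sum_univ_castSucc]
  simp [partialSum_castSucc, Fin.init_snoc, monomial, Fin.init]

lemma setIntegral_monomial_simplex_eq_pow_mul (m : Fin n → ℕ) {s : ℝ} (hs : 0 < s) :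
    ∫ t in simplex n s, monomial m t = s ^ (n + ∑ k, m k) * ∫ t in simplex n 1, monomial m t := by
  have h := Measure.setIntegral_comp_smul_of_pos volume (monomial m) (simplex n 1) hs
  rw [smul_simplex hs, Module.finrank_fin_fun] at h
  simp only [monomial_smul, integral_const_mul, smul_eq_mul] at h
  rw [pow_add, mul_assoc, h]
  field_simp

def snocTotal (p : (Fin n → ℝ) × ℝ) : Fin (n + 1) → ℝ := Fin.snoc p.1 (p.2 - ∑ i, p.1 i)

lemma measurePreserving_snocTotal :
    MeasurePreserving (snocTotal (n := n)) (volume.prod volume) volume := by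
  have shear : MeasurePreserving (fun p : (Fin n → ℝ) × ℝ => (p.1, p.2 - ∑ i, p.1 i))
      (volume.prod volume) (volume.prod volume) :=
    (MeasurePreserving.id volume).skew_product (by fun_prop)
      (ae_of_all _ fun t => (measurePreserving_sub_right volume _).map_eq)
  have := (volume_preserving_piFinSuccAbove (fun _ => ℝ) (Fin.last n)).symm
  convert this.comp (Measure.measurePreserving_swap.comp shear) using 1
  · rfl
  funext p
  simp [snocTotal, MeasurableEquiv.piFinSuccAbove, Fin.snocEquiv]

lemma snocTotal_mem_simplex_iff {t : Fin n → ℝ} {v s : ℝ} :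
    snocTotal (t, v) ∈ simplex (n + 1) s ↔ t ∈ simplex n v ∧ v ≤ s := by
  simp [simplex, snocTotal, Fin.forall_fin_succ', Fin.sum_univ_castSucc, and_assoc]

lemma setIntegral_simplex_succ (f : (Fin (n + 1) → ℝ) → ℝ) (s : ℝ)
    (hf : IntegrableOn f (simplex (n + 1) s)) :
    ∫ t in simplex (n + 1) s, f t = ∫ v in Icc 0 s, ∫ t in simplex n v, f (snocTotal (t, v)) := by
  set g := (simplex (n + 1) s).indicator f
  have hg : Integrable g := hf.integrable_indicator (measurableSet_simplex _ _)
  have hΦ := measurePreserving_snocTotal (n := n)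
  have slice : ∀ v, ∫ t, g (snocTotal (t, v)) =
      (Iic s).indicator (fun v => ∫ t in simplex n v, f (snocTotal (t, v))) v := by
    intro v
    simp_rw [g, ← Set.indicator_comp_right (fun t => snocTotal (t, v))]
    by_cases hv : v ≤ s
    · have hpre : (fun t => snocTotal (t, v)) ⁻¹' simplex (n + 1) s = simplex n v := by
        ext t
        exact snocTotal_mem_simplex_iff.trans (and_iff_left hv)
      rw [hpre, integral_indicator (measurableSet_simplex n v),
        indicator_of_mem (Set.mem_Iic.2 hv)]
      rfl
    · have hpre : (fun t => snocTotal (t, v)) ⁻¹' simplex (n + 1) s = ∅ := by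
        ext t
        simp [snocTotal_mem_simplex_iff, hv]
      simp [hpre, hv]
  calc ∫ t in simplex (n + 1) s, f t = ∫ t, g t :=
        (integral_indicator (measurableSet_simplex _ _)).symm
    _ = ∫ p, g (snocTotal p) ∂(volume.prod volume) := by
        rw [← integral_map hΦ.measurable.aemeasurable (hΦ.map_eq ▸ hg.aestronglyMeasurable),
          hΦ.map_eq]
    _ = ∫ v, ∫ t, g (snocTotal (t, v)) := integral_prod_symm _ (hΦ.integrable_comp_of_integrable hg)
    _ = ∫ v in Iic s, ∫ t in simplex n v, f (snocTotal (t, v)) := by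
        simp_rw [slice]
        exact integral_indicator measurableSet_Iic
    _ = ∫ v in Icc 0 s, ∫ t in simplex n v, f (snocTotal (t, v)) := by
        refine setIntegral_eq_of_subset_of_forall_sdiff_eq_zero measurableSet_Iic
          Icc_subset_Iic_self fun v hv => ?_
        have hv₀ : v < 0 := lt_of_not_ge fun h => hv.2 ⟨h, hv.1⟩
        simp [simplex_eq_empty_of_neg hv₀]

lemma setIntegral_monomial_simplex_succ (m : Fin (n + 1) → ℕ) :
    ∫ t in simplex (n + 1) 1, monomial m t =
      (∫ t in simplex n 1, monomial (Fin.init m) t) / (n + 1 + ∑ k, m k) := by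
  have slice : EqOn (fun v => ∫ t in simplex n v, monomial m (snocTotal (t, v)))
      (fun v => v ^ (n + ∑ k, m k) * ∫ t in simplex n 1, monomial (Fin.init m) t) (Ioc 0 1) := by
    intro v hv
    simp only [snocTotal, monomial_snoc, add_sub_cancel]
    rw [integral_mul_const, setIntegral_monomial_simplex_eq_pow_mul _ hv.1, Fin.sum_univ_castSucc m]
    simp only [Fin.init]
    ring
  rw [setIntegral_simplex_succ _ 1 (integrableOn_monomial_simplex m 1), integral_Icc_eq_integral_Ioc,
    setIntegral_congr_fun measurableSet_Ioc slice, integral_mul_const,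
    ← intervalIntegral.integral_of_le zero_le_one, integral_pow]
  push_cast
  ring

theorem setIntegral_monomial_simplex (m : Fin n → ℕ) :
    ∫ t in simplex n 1, monomial m t =
      ∏ k : Fin n, (((k : ℕ) + 1 : ℝ) + partialSum (fun i => (m i : ℝ)) k)⁻¹ := by
  induction n with
  | zero => simp [simplex, monomial, Measure.real, volume_pi]
  | succ n ih =>
    rw [setIntegral_monomial_simplex_succ, ih, div_eq_mul_inv, Fin.prod_univ_castSucc,
      partialSum_last]
    simp only [partialSum_castSucc, Fin.val_castSucc, Fin.val_last]
    push_cast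
    rfl

end SimplexIntegral

theorem integral_simplex_monomial_general (ℓ : ℕ) (m : Fin ℓ → ℕ) :
    IntegrableOn
      (fun t : Fin ℓ → ℝ => ∏ k : Fin ℓ,
        (∑ i ∈ Finset.univ.filter (fun i : Fin ℓ => i ≤ k), t i) ^ m k)
      {t : Fin ℓ → ℝ | (∀ i, 0 ≤ t i) ∧ ∑ i, t i ≤ 1} volume ∧
    (∫ t in {t : Fin ℓ → ℝ | (∀ i, 0 ≤ t i) ∧ ∑ i, t i ≤ 1},
        ∏ k : Fin ℓ, (∑ i ∈ Finset.univ.filter (fun i : Fin ℓ => i ≤ k), t i) ^ m k)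
      = ∏ k : Fin ℓ,
          (((k : ℕ) + 1 : ℝ)
            + ∑ i ∈ Finset.univ.filter (fun i : Fin ℓ => i ≤ k), (m i : ℝ))⁻¹ :=
  ⟨SimplexIntegral.integrableOn_monomial_simplex m 1,
    SimplexIntegral.setIntegral_monomial_simplex m⟩

/-- For every `ℓ ≥ 1` and `m ∈ ℕ^ℓ`, the Lebesgue integral over the
standard `ℓ`-simplex `Ω = {t ∈ ℝ^ℓ : t_i ≥ 0, Σ t_i ≤ 1}` of
`t ↦ ∏_{k=1}^{ℓ} (Σ_{i=1}^{k} t_i)^{m_k}` exists and equals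
`∏_{k=1}^{ℓ} (k + Σ_{i=1}^{k} m_i)⁻¹`.
(The indices of `t` and `m` are shifted to start at `0`.) -/
theorem integral_simplex_monomial (ℓ : ℕ) (hℓ : 1 ≤ ℓ) (m : Fin ℓ → ℕ) :
    IntegrableOn
      (fun t : Fin ℓ → ℝ => ∏ k : Fin ℓ,
        (∑ i ∈ Finset.univ.filter (fun i : Fin ℓ => i ≤ k), t i) ^ m k)
      {t : Fin ℓ → ℝ | (∀ i, 0 ≤ t i) ∧ ∑ i, t i ≤ 1} volume ∧
    (∫ t in {t : Fin ℓ → ℝ | (∀ i, 0 ≤ t i) ∧ ∑ i, t i ≤ 1},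
        ∏ k : Fin ℓ, (∑ i ∈ Finset.univ.filter (fun i : Fin ℓ => i ≤ k), t i) ^ m k)
      = ∏ k : Fin ℓ,
          (((k : ℕ) + 1 : ℝ)
            + ∑ i ∈ Finset.univ.filter (fun i : Fin ℓ => i ≤ k), (m i : ℝ))⁻¹ :=
  integral_simplex_monomial_general ℓ m
end

section
/- The assignments Z₁ e_{(n,m)} := q^{Σ_{i=1}^{ℓ} n_i} e_{(n, m+1)} and, for j ∈ {2,…,N}, Z_j e_{(n,m)} := q^{Σ_{i=1}^{N−j} n_i} · √(1 − q^{2(n_{N−j+1}+1)}) · e_{(n + δ_{N−j+1}, m)} extend to bounded linear operators Z₁,…,Z_N on the Hilbert space H = ℓ²((ℕ^ℓ) × ℤ), and these operators satisfy Z_i Z_j = q·Z_j Z_i for all i < j and Z_i* Z_j = q·Z_j Z_i* for all i ≠ j. -/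
noncomputable section

/-- The Hilbert space `ℓ²((ℕ^ℓ) × ℤ)`. -/
abbrev Hsp (ℓ : ℕ) := lp (fun _ : (Fin ℓ → ℕ) × ℤ => ℂ) 2

/-- The standard orthonormal basis vector `e_{(n,m)}` of `ℓ²((ℕ^ℓ) × ℤ)`. -/
def eVec (ℓ : ℕ) (p : (Fin ℓ → ℕ) × ℤ) : Hsp ℓ := lp.single 2 p 1

/-!
The adjoint `Z_i*` is the weighted composition operator `f ↦ w_i · (f ∘ σ_i)`, where `σ_i`
is an injective shift of the index set `ℕ^ℓ × ℤ` and `|w_i| ≤ 1`; this makes it bounded, and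
`Z_i` is recovered as its adjoint, sending `e_p` to `w_i(p) e_{σ_i p}`. Composites of weighted
composition operators are again of this form, so `Z_i Z_j = q Z_j Z_i` reduces to the commuting
of the shifts and to `w_j · (w_i ∘ σ_j) = q · w_i · (w_j ∘ σ_i)`, which holds because
`w_i ∘ σ_j = q · w_i` and `w_j ∘ σ_i = w_j` for `i < j`. The same two facts give
`Z_i* Z_j = q Z_j Z_i*` on basis vectors, once one notes that `σ_j` preserves the complement
of the range of `σ_i`, on which `Z_i*` vanishes.
-/

open scoped lp ComplexConjugate NNReal ENNReal
open Function ContinuousLinearMap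

theorem Pi.add_single_eq_update {ι M : Type*} [DecidableEq ι] [AddZeroClass M] (f : ι → M)
    (i : ι) (a : M) : f + Pi.single i a = update f i (f i + a) := by
  ext j
  rcases eq_or_ne j i with rfl | h <;> simp [*]

namespace lp

variable {ι 𝕜 : Type*} [RCLike 𝕜]

theorem ext_single [DecidableEq ι] {F : Type*} [AddCommMonoid F] [Module 𝕜 F] [TopologicalSpace F]
    [T2Space F] {T S : ℓ²(ι, 𝕜) →L[𝕜] F}
    (h : ∀ i, T (lp.single 2 i 1) = S (lp.single 2 i 1)) : T = S :=
  lp.ext_continuousLinearMap (by norm_num) fun i => ContinuousLinearMap.ext_ring (h i)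

variable {w v : ι → 𝕜} {σ τ : ι → ι} {C D : ℝ≥0}

theorem sum_norm_rpow_mul_comp_le (hσ : Injective σ) (hw : ∀ i, ‖w i‖ ≤ C) (f : ℓ²(ι, 𝕜))
    (s : Finset ι) :
    ∑ i ∈ s, ‖w i * f (σ i)‖ ^ (2 : ℝ≥0∞).toReal ≤ (C * ‖f‖) ^ (2 : ℝ≥0∞).toReal := by
  set p := (2 : ℝ≥0∞).toReal
  calc ∑ i ∈ s, ‖w i * f (σ i)‖ ^ p
      ≤ ∑ i ∈ s, (C : ℝ) ^ p * ‖f (σ i)‖ ^ p := by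
        gcongr with i
        rw [norm_mul, Real.mul_rpow (norm_nonneg _) (norm_nonneg _)]
        gcongr
        exact hw i
    _ = C ^ p * ∑ j ∈ s.map ⟨σ, hσ⟩, ‖f j‖ ^ p := by rw [Finset.mul_sum, Finset.sum_map]; rfl
    _ ≤ C ^ p * ‖f‖ ^ p := by gcongr; exact lp.sum_rpow_le_norm_rpow (by norm_num [p]) f _
    _ = (C * ‖f‖) ^ p := (Real.mul_rpow C.2 (norm_nonneg f)).symm

def weightedComp (w : ι → 𝕜) (hσ : Injective σ) (hw : ∀ i, ‖w i‖ ≤ C) :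
    ℓ²(ι, 𝕜) →L[𝕜] ℓ²(ι, 𝕜) :=
  LinearMap.mkContinuous
    { toFun f := ⟨fun i => w i * f (σ i), memℓp_gen' (sum_norm_rpow_mul_comp_le hσ hw f)⟩
      map_add' f g := lp.ext <| funext fun i => mul_add _ _ _
      map_smul' c f := lp.ext <| funext fun i => mul_left_comm _ _ _ }
    C fun f => lp.norm_le_of_forall_sum_le (by norm_num) (by positivity)
      (sum_norm_rpow_mul_comp_le hσ hw f)

variable {hσ : Injective σ} {hw : ∀ i, ‖w i‖ ≤ C} {hτ : Injective τ} {hv : ∀ i, ‖v i‖ ≤ D} {c : 𝕜}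

@[simp]
theorem weightedComp_apply (f : ℓ²(ι, 𝕜)) (i : ι) : weightedComp w hσ hw f i = w i * f (σ i) :=
  rfl

theorem weightedComp_comp_eq_smul (hστ : ∀ i, τ (σ i) = σ (τ i))
    (hwv : ∀ i, w i * v (σ i) = c * (v i * w (τ i))) :
    weightedComp w hσ hw ∘L weightedComp v hτ hv
      = c • (weightedComp v hτ hv ∘L weightedComp w hσ hw) := by
  ext f i
  simp only [ContinuousLinearMap.comp_apply, smul_apply, weightedComp_apply, lp.coeFn_smul,
    Pi.smul_apply, smul_eq_mul, hστ]
  linear_combination f (σ (τ i)) * hwv i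

variable [DecidableEq ι]

theorem weightedComp_single (x : ι) :
    weightedComp w hσ hw (lp.single 2 (σ x) 1) = w x • lp.single 2 x 1 := by
  ext i
  by_cases h : i = x <;> simp [hσ.eq_iff, h]

theorem weightedComp_single_of_notMem_range {r : ι} (hr : r ∉ Set.range σ) :
    weightedComp w hσ hw (lp.single 2 r 1) = 0 := by
  ext i
  simp [show σ i ≠ r from fun h => hr ⟨i, h⟩]

theorem adjoint_weightedComp_single (r : ι) :
    adjoint (weightedComp w hσ hw) (lp.single 2 r 1) = conj (w r) • lp.single 2 (σ r) 1 := by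
  refine ext_inner_right 𝕜 fun f => ?_
  rw [adjoint_inner_left, inner_smul_left, lp.inner_single_left, lp.inner_single_left]
  simp

theorem weightedComp_comp_adjoint_eq_smul (hστ : ∀ i, τ (σ i) = σ (τ i))
    (hrange : ∀ p, τ p ∈ Set.range σ → p ∈ Set.range σ)
    (hwv : ∀ x, conj (v (σ x)) * w (τ x) = c * (w x * conj (v x))) :
    weightedComp w hσ hw ∘L adjoint (weightedComp v hτ hv)
      = c • (adjoint (weightedComp v hτ hv) ∘L weightedComp w hσ hw) := by
  refine ext_single fun p => ?_
  simp only [ContinuousLinearMap.comp_apply, smul_apply, adjoint_weightedComp_single, map_smul]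
  by_cases hp : p ∈ Set.range σ
  · obtain ⟨x, rfl⟩ := hp
    rw [hστ, weightedComp_single, weightedComp_single, map_smul, adjoint_weightedComp_single,
      smul_smul, smul_smul, smul_smul, hwv, mul_assoc]
  · rw [weightedComp_single_of_notMem_range (mt (hrange p) hp),
      weightedComp_single_of_notMem_range hp]
    simp

end lp

theorem ContinuousLinearMap.adjoint_comp_adjoint_eq_smul {𝕜 E : Type*} [RCLike 𝕜]
    [NormedAddCommGroup E] [InnerProductSpace 𝕜 E] [CompleteSpace E] {A B : E →L[𝕜] E} {c : 𝕜}
    (h : A ∘L B = c • (B ∘L A)) : adjoint B ∘L adjoint A = conj c • (adjoint A ∘L adjoint B) := by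
  rw [← adjoint_comp, h, LinearIsometryEquiv.map_smulₛₗ, adjoint_comp]

namespace SphereGenerators

variable {ℓ : ℕ} {q : ℝ}

def coordWeight (q : ℝ) (k : Fin ℓ) (n : Fin ℓ → ℕ) : ℝ :=
  q ^ (∑ i ∈ Finset.univ.filter (· < k), n i) * √(1 - q ^ (2 * (n k + 1)))

theorem coordWeight_add_single_of_lt {k t : Fin ℓ} (htk : t < k) (n : Fin ℓ → ℕ) :
    coordWeight q k (n + Pi.single t 1) = q * coordWeight q k n := by
  simp only [coordWeight, Pi.add_apply, Finset.sum_add_distrib, Finset.sum_pi_single',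
    Finset.mem_filter, Finset.mem_univ, true_and, htk, if_true, Pi.single_eq_of_ne htk.ne',
    add_zero, pow_succ]
  ring

theorem coordWeight_add_single_of_gt {k t : Fin ℓ} (hkt : k < t) (n : Fin ℓ → ℕ) :
    coordWeight q k (n + Pi.single t 1) = coordWeight q k n := by
  simp [coordWeight, Finset.sum_add_distrib, not_lt.2 hkt.le, hkt.ne]

theorem abs_coordWeight_le_one (hq : |q| ≤ 1) (k : Fin ℓ) (n : Fin ℓ → ℕ) :
    |coordWeight q k n| ≤ 1 := by
  rw [coordWeight, abs_mul, abs_pow, abs_of_nonneg (Real.sqrt_nonneg _)]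
  refine mul_le_one₀ (pow_le_one₀ (abs_nonneg q) hq) (Real.sqrt_nonneg _) ?_
  have := (even_two_mul (n k + 1)).pow_nonneg q
  exact Real.sqrt_le_one.mpr (by linarith)

/-- `Z₀` raises `m`; `Z_{j+1}` raises the coordinate `n_{ℓ-1-j} = n_{rev j}`. -/
def shift : Fin (ℓ + 1) → (Fin ℓ → ℕ) × ℤ → (Fin ℓ → ℕ) × ℤ :=
  Fin.cons (fun p => (p.1, p.2 + 1)) fun j p => (p.1 + Pi.single j.rev 1, p.2)

def weight (q : ℝ) : Fin (ℓ + 1) → (Fin ℓ → ℕ) × ℤ → ℝ :=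
  Fin.cons (fun p => q ^ ∑ i, p.1 i) fun j p => coordWeight q j.rev p.1

@[simp] theorem shift_zero (p : (Fin ℓ → ℕ) × ℤ) : shift 0 p = (p.1, p.2 + 1) := rfl
@[simp] theorem shift_succ (j : Fin ℓ) (p : (Fin ℓ → ℕ) × ℤ) :
    shift j.succ p = (p.1 + Pi.single j.rev 1, p.2) := rfl
@[simp] theorem weight_zero (p : (Fin ℓ → ℕ) × ℤ) : weight q 0 p = q ^ ∑ i, p.1 i := rfl
@[simp] theorem weight_succ (j : Fin ℓ) (p : (Fin ℓ → ℕ) × ℤ) :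
    weight q j.succ p = coordWeight q j.rev p.1 := rfl

theorem shift_injective (i : Fin (ℓ + 1)) : Function.Injective (shift i) := by
  cases i using Fin.cases <;> intro p p' h <;> simpa [Prod.ext_iff] using h

theorem shift_comm (i j : Fin (ℓ + 1)) (p : (Fin ℓ → ℕ) × ℤ) :
    shift i (shift j p) = shift j (shift i p) := by
  cases i using Fin.cases <;> cases j using Fin.cases <;> simp [add_right_comm]

theorem mem_range_shift_succ {j : Fin ℓ} {p : (Fin ℓ → ℕ) × ℤ} :
    p ∈ Set.range (shift j.succ) ↔ p.1 j.rev ≠ 0 := by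
  refine ⟨?_, fun h => ⟨(Function.update p.1 j.rev (p.1 j.rev - 1), p.2), ?_⟩⟩
  · rintro ⟨p', rfl⟩
    simp
  · refine Prod.ext ?_ rfl
    simp [Pi.add_single_eq_update, Nat.sub_add_cancel (Nat.pos_of_ne_zero h)]

theorem mem_range_of_shift_mem_range {i j : Fin (ℓ + 1)} (hij : i ≠ j) (p : (Fin ℓ → ℕ) × ℤ)
    (hp : shift j p ∈ Set.range (shift i)) : p ∈ Set.range (shift i) := by
  cases i using Fin.cases with
  | zero => exact ⟨(p.1, p.2 - 1), by simp⟩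
  | succ a =>
    rw [mem_range_shift_succ] at hp ⊢
    cases j using Fin.cases with
    | zero => exact hp
    | succ b =>
      have : b.rev ≠ a.rev := by simpa [eq_comm] using hij
      simpa [this] using hp

theorem abs_weight_le_one (hq : |q| ≤ 1) (i : Fin (ℓ + 1)) (p : (Fin ℓ → ℕ) × ℤ) :
    |weight q i p| ≤ 1 := by
  cases i using Fin.cases with
  | zero => simpa [abs_pow] using pow_le_one₀ (abs_nonneg q) hq
  | succ j => exact abs_coordWeight_le_one hq _ _

theorem weight_shift_of_lt {i j : Fin (ℓ + 1)} (hij : i < j) (p : (Fin ℓ → ℕ) × ℤ) :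
    weight q i (shift j p) = q * weight q i p := by
  cases j using Fin.cases with
  | zero => exact absurd hij (Fin.not_lt_zero i)
  | succ b =>
    cases i using Fin.cases with
    | zero => simp [Finset.sum_add_distrib, pow_succ, mul_comm]
    | succ a =>
      exact coordWeight_add_single_of_lt (Fin.rev_lt_rev.2 (Fin.succ_lt_succ_iff.1 hij)) _

theorem weight_shift_of_gt {i j : Fin (ℓ + 1)} (hij : i < j) (p : (Fin ℓ → ℕ) × ℤ) :
    weight q j (shift i p) = weight q j p := by
  cases j using Fin.cases with
  | zero => exact absurd hij (Fin.not_lt_zero i)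
  | succ b =>
    cases i using Fin.cases with
    | zero => rfl
    | succ a =>
      exact coordWeight_add_single_of_gt (Fin.rev_lt_rev.2 (Fin.succ_lt_succ_iff.1 hij)) _


def generatorAdjoint (hq : |q| ≤ 1) (i : Fin (ℓ + 1)) : Hsp ℓ →L[ℂ] Hsp ℓ :=
  lp.weightedComp (fun p => (weight q i p : ℂ)) (shift_injective i) (C := 1)
    fun p => by simpa using abs_weight_le_one hq i p

theorem adjoint_generatorAdjoint_single (hq : |q| ≤ 1) (i : Fin (ℓ + 1))
    (p : (Fin ℓ → ℕ) × ℤ) :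
    adjoint (generatorAdjoint hq i) (lp.single 2 p 1)
      = (weight q i p : ℂ) • lp.single 2 (shift i p) 1 := by
  rw [generatorAdjoint, lp.adjoint_weightedComp_single, Complex.conj_ofReal]

theorem generatorAdjoint_comp_eq_smul (hq : |q| ≤ 1) {i j : Fin (ℓ + 1)} (hij : i < j) :
    generatorAdjoint hq j ∘L generatorAdjoint hq i
      = (q : ℂ) • (generatorAdjoint hq i ∘L generatorAdjoint hq j) :=
  lp.weightedComp_comp_eq_smul (fun p => shift_comm i j p) fun p => by
    rw [weight_shift_of_lt hij, weight_shift_of_gt hij]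
    push_cast
    ring

theorem generatorAdjoint_comp_adjoint_eq_smul (hq : |q| ≤ 1) {i j : Fin (ℓ + 1)} (hij : i ≠ j) :
    generatorAdjoint hq i ∘L adjoint (generatorAdjoint hq j)
      = (q : ℂ) • (adjoint (generatorAdjoint hq j) ∘L generatorAdjoint hq i) := by
  refine lp.weightedComp_comp_adjoint_eq_smul (fun p => shift_comm j i p)
    (mem_range_of_shift_mem_range hij) fun p => ?_
  simp only [Complex.conj_ofReal]
  rcases hij.lt_or_gt with h | h <;>
    · rw [weight_shift_of_lt h, weight_shift_of_gt h]
      push_cast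
      ring

end SphereGenerators

-- `Z 0` is the paper's `Z₁`, and `n i` its `n_{i+1}`.
open SphereGenerators in
/-- The assignments `Z₁ e_{(n,m)} = q^{Σ_i n_i} e_{(n,m+1)}` and, for
`j ∈ {2,…,N}`, `Z_j e_{(n,m)} = q^{Σ_{i=1}^{N−j} n_i} √(1−q^{2(n_{N−j+1}+1)}) e_{(n+δ_{N−j+1},m)}`
extend to bounded linear operators `Z₁,…,Z_N` on `ℓ²((ℕ^ℓ) × ℤ)`, and these satisfy
`Z_i Z_j = q Z_j Z_i` for `i < j` and `Z_i* Z_j = q Z_j Z_i*` for `i ≠ j`.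
(The indices of `Z` and `n` are shifted to start at `0`.) -/
theorem exists_sphere_generators (q : ℝ) (hq : q ∈ Set.Ioo (0 : ℝ) 1) (ℓ : ℕ) :
    ∃ Z : Fin (ℓ + 1) → (Hsp ℓ →L[ℂ] Hsp ℓ),
      (∀ (n : Fin ℓ → ℕ) (m : ℤ),
        Z 0 (eVec ℓ (n, m)) = ((q : ℂ) ^ (∑ i, n i)) • eVec ℓ (n, m + 1)) ∧
      (∀ (j : Fin (ℓ + 1)) (hj : 1 ≤ (j : ℕ)) (n : Fin ℓ → ℕ) (m : ℤ),
        Z j (eVec ℓ (n, m))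
          = (((q : ℂ) ^ (∑ i ∈ Finset.univ.filter (fun i : Fin ℓ => (i : ℕ) < ℓ - (j : ℕ)), n i))
              * ((Real.sqrt (1 - q ^ (2 * (n ⟨ℓ - (j : ℕ), by have := j.isLt; omega⟩ + 1))) : ℝ) : ℂ))
            • eVec ℓ (Function.update n ⟨ℓ - (j : ℕ), by have := j.isLt; omega⟩
                (n ⟨ℓ - (j : ℕ), by have := j.isLt; omega⟩ + 1), m)) ∧
      (∀ i j : Fin (ℓ + 1), i < j → Z i ∘L Z j = (q : ℂ) • (Z j ∘L Z i)) ∧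
      (∀ i j : Fin (ℓ + 1), i ≠ j →
        ContinuousLinearMap.adjoint (Z i) ∘L Z j
          = (q : ℂ) • (Z j ∘L ContinuousLinearMap.adjoint (Z i))) := by
  have hq' : |q| ≤ 1 := abs_le.2 ⟨by linarith [hq.1], hq.2.le⟩
  refine ⟨fun i => adjoint (generatorAdjoint hq' i), fun n m => ?_, fun j hj n m => ?_,
    fun i j hij => ?_, fun i j hij => ?_⟩
  · simpa [eVec] using adjoint_generatorAdjoint_single hq' 0 (n, m)
  · obtain ⟨j, rfl⟩ := Fin.exists_succ_eq.2 (Fin.pos_iff_ne_zero.1 hj)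
    have hk : ∀ h, (⟨ℓ - (j.succ : ℕ), h⟩ : Fin ℓ) = j.rev := fun h => Fin.ext (by simp)
    simp only [hk, eVec, ← Pi.add_single_eq_update, adjoint_generatorAdjoint_single, weight_succ,
      shift_succ, coordWeight]
    push_cast
    -- the sums differ only in the filter `x < j.rev`, which unfolds to `↑x < ℓ - ↑j.succ`
    rfl
  · simpa using adjoint_comp_adjoint_eq_smul (generatorAdjoint_comp_eq_smul hq' hij)
  · simpa using generatorAdjoint_comp_adjoint_eq_smul hq' hij

end
end

section
/- For every q ∈ (0,1) and every integer ℓ ≥ 1 with N := ℓ + 1, the map λ : ℕ^ℓ → ℝ^ℓ defined by λ(n)₁ := q^{2 Σ_{j=1}^{ℓ} n_j} and λ(n)_k := q^{2 Σ_{j=1}^{N−k} n_j}·(1 − q^{2 n_{N−k+1}}) for k ∈ {2,…,ℓ} is injective. -/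
private lemma sum_filter_lt_succ {ℓ : ℕ} (v : Fin ℓ → ℕ) (t : ℕ) (ht : t < ℓ) :
    ∑ j ∈ Finset.univ.filter (fun j : Fin ℓ => (j : ℕ) < t + 1), v j
      = (∑ j ∈ Finset.univ.filter (fun j : Fin ℓ => (j : ℕ) < t), v j) + v ⟨t, ht⟩ := by
  rw [show (Finset.univ.filter (fun j : Fin ℓ => (j : ℕ) < t + 1))
      = insert ⟨t, ht⟩ (Finset.univ.filter (fun j : Fin ℓ => (j : ℕ) < t)) by
        ext j; simp [Fin.ext_iff]; omega,
    Finset.sum_insert (by simp)]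
  omega

/-- For `q ∈ (0,1)` and `ℓ ≥ 1` with `N = ℓ + 1`, the map
`λ : ℕ^ℓ → ℝ^ℓ` given by `λ(n)₁ = q^{2 Σ_{j=1}^{ℓ} n_j}` and
`λ(n)_k = q^{2 Σ_{j=1}^{N−k} n_j}(1 − q^{2 n_{N−k+1}})` for `k ∈ {2,…,ℓ}` is injective.
(The indices of `n` and of the components are shifted to start at `0`.) -/
theorem lambda_injective (q : ℝ) (hq : q ∈ Set.Ioo (0 : ℝ) 1) (ℓ : ℕ) (hℓ : 1 ≤ ℓ) :
    Function.Injective (fun (n : Fin ℓ → ℕ) (k : Fin ℓ) =>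
      if hk : (k : ℕ) = 0 then q ^ (2 * ∑ j, n j)
      else
        q ^ (2 * ∑ j ∈ Finset.univ.filter (fun j : Fin ℓ => (j : ℕ) < ℓ - (k : ℕ)), n j) *
          (1 - q ^ (2 * n ⟨ℓ - (k : ℕ), by have := k.isLt; omega⟩))) := by
  obtain ⟨hq0, hq1⟩ := hq
  have qinj : ∀ a b : ℕ, q ^ a = q ^ b → a = b :=
    fun a b hab => (pow_right_strictAnti₀ hq0 hq1).injective hab
  intro m n h
  set S : (Fin ℓ → ℕ) → ℕ → ℕ :=
    fun v t => ∑ j ∈ Finset.univ.filter (fun j : Fin ℓ => (j : ℕ) < t), v j with hS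
  have hfull : ∀ v : Fin ℓ → ℕ, S v ℓ = ∑ j, v j := by
    intro v
    simp only [hS]
    rw [Finset.filter_true_of_mem (fun j _ => j.isLt)]
  have key : ∀ i, i < ℓ → S m (ℓ - i) = S n (ℓ - i) := by
    intro i
    induction i with
    | zero =>
      intro _
      have h0 := congrFun h ⟨0, by omega⟩
      simp only [Fin.val_mk, dif_pos rfl] at h0
      have := qinj _ _ h0
      simp only [Nat.sub_zero, hfull]
      omega
    | succ i ih =>
      intro hi
      have ih' := ih (by omega)
      have hk := congrFun h ⟨i + 1, hi⟩
      simp only [Fin.val_mk, dif_neg (Nat.succ_ne_zero i)] at hk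
      have hstep : ∀ v : Fin ℓ → ℕ,
          S v (ℓ - (i + 1)) + v ⟨ℓ - (i + 1), by omega⟩ = S v (ℓ - i) := by
        intro v
        have := (sum_filter_lt_succ v (ℓ - (i + 1)) (by omega)).symm
        rw [show ℓ - (i + 1) + 1 = ℓ - i by omega] at this
        simp only [hS]
        omega
      have expand : ∀ (a b : ℕ), q ^ (2 * a) * (1 - q ^ (2 * b))
          = q ^ (2 * a) - q ^ (2 * (a + b)) := by
        intro a b
        rw [mul_sub, mul_one, ← pow_add]
        ring_nf
      rw [expand, expand] at hk
      rw [hstep m, hstep n, ih'] at hk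
      have : q ^ (2 * S m (ℓ - (i + 1))) = q ^ (2 * S n (ℓ - (i + 1))) := by
        linarith
      have := qinj _ _ this
      omega
  have keyt : ∀ t, t ≤ ℓ → S m t = S n t := by
    intro t ht
    rcases Nat.eq_zero_or_pos t with h0 | h0
    · subst h0
      simp [hS]
    · have := key (ℓ - t) (by omega)
      rwa [show ℓ - (ℓ - t) = t by omega] at this
  funext j
  have h1 := keyt j (by omega)
  have h2 := keyt (j + 1) j.isLt
  have sm := sum_filter_lt_succ m j j.isLt
  have sn := sum_filter_lt_succ n j j.isLt
  simp only [hS] at h1 h2 sm sn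
  have : m ⟨(j : ℕ), j.isLt⟩ = n ⟨(j : ℕ), j.isLt⟩ := by omega
  simpa using this
end

section
/- Let q ∈ (0,1), let k ∈ ℕ, let A be a unital C*-algebra, and let a, z ∈ A with a positive (a = a* and the spectrum of a contained in [0,∞)) such that z z* = q^{2k}·1 − a and z* z = q^{2k}·1 − q²·a. Then the spectrum of a is contained in {q^{2m} : m ∈ ℕ, m ≥ k} ∪ {0}. -/
/-!
Since `z z*` and `z* z` have the same nonzero spectrum, the relations show that every
`μ ≠ q^{2k}` in `Sp(a)` comes with `q^{-2} μ ∈ Sp(a)`. Starting from a nonzero `μ`, the points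
`q^{-2n} μ` would run off to infinity in the bounded set `Sp(a)` unless the iteration stops, that
is, unless `q^{-2n} μ = q^{2k}` for some `n`.
-/

open Bornology Filter

namespace spectrum

variable {𝕜 A : Type*} [Field 𝕜] [Ring A] [Algebra 𝕜 A]

theorem sub_mem_smul_one_sub_iff {a : A} {c μ : 𝕜} :
    c - μ ∈ spectrum 𝕜 (c • (1 : A) - a) ↔ μ ∈ spectrum 𝕜 a := by
  rw [← Algebra.algebraMap_eq_smul_one, ← singleton_sub_eq, Set.singleton_sub,
    (sub_right_injective (G := 𝕜)).mem_set_image]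

theorem div_mem_of_mul_eq_of_mul_eq {a x y : A} {c t μ : 𝕜}
    (hxy : x * y = c • (1 : A) - a) (hyx : y * x = c • (1 : A) - t • a) (ht : t ≠ 0)
    (hμ : μ ∈ spectrum 𝕜 a) (hμc : μ ≠ c) : μ / t ∈ spectrum 𝕜 a := by
  have hxy_mem : c - μ ∈ spectrum 𝕜 (x * y) \ {0} :=
    ⟨hxy ▸ sub_mem_smul_one_sub_iff.mpr hμ, sub_ne_zero.mpr hμc.symm⟩
  rw [nonzero_mul_comm, hyx] at hxy_mem
  have hμ_smul : t • (μ / t) ∈ spectrum 𝕜 (t • a) := by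
    rw [smul_eq_mul, mul_div_cancel₀ μ ht]
    exact sub_mem_smul_one_sub_iff.mp hxy_mem.1
  exact (smul_mem_smul_iff (r := Units.mk0 t ht)).mp hμ_smul

end spectrum

theorem exists_eq_mul_pow_of_forall_div_mem {𝕜 : Type*} [NormedField 𝕜] {S : Set 𝕜}
    (hS : IsBounded S) {c t r : 𝕜} (ht : t ≠ 0) (ht_lt : ‖t‖ < 1)
    (hstep : ∀ μ ∈ S, μ ≠ c → μ / t ∈ S) (hr : r ∈ S) (hr0 : r ≠ 0) :
    ∃ n : ℕ, r = c * t ^ n := by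
  by_contra! hne
  have hmem : ∀ n : ℕ, r / t ^ n ∈ S := by
    intro n
    induction n with
    | zero => simpa using hr
    | succ n ih =>
      have hc : r / t ^ n ≠ c := fun h =>
        hne n (by rw [← h, div_mul_cancel₀ r (pow_ne_zero n ht)])
      simpa [pow_succ, div_div] using hstep _ ih hc
  obtain ⟨R, hR⟩ := isBounded_iff_forall_norm_le.mp hS
  have hle : ∀ n : ℕ, ‖r‖ ≤ ‖t‖ ^ n * R := fun n =>
    calc ‖r‖ = ‖t‖ ^ n * ‖r / t ^ n‖ := by
          rw [norm_div, norm_pow, mul_div_cancel₀ _ (pow_ne_zero n (norm_ne_zero_iff.mpr ht))]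
      _ ≤ ‖t‖ ^ n * R := by gcongr; exact hR _ (hmem n)
  have hlim : Tendsto (fun n : ℕ => ‖t‖ ^ n * R) atTop (nhds 0) := by
    simpa using (tendsto_pow_atTop_nhds_zero_of_lt_one (norm_nonneg t) ht_lt).mul_const R
  exact hr0 (norm_le_zero_iff.mp (ge_of_tendsto' hlim hle))

theorem spectrum_subset_of_sphere_relations_general
    {A : Type*} [NormedRing A] [StarRing A] [NormedAlgebra ℂ A]
    [CompleteSpace A]
    (q : ℝ) (hq : q ∈ Set.Ioo (0 : ℝ) 1) (k : ℕ) (a z : A)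
    (h1 : z * star z = ((q : ℂ) ^ (2 * k)) • (1 : A) - a)
    (h2 : star z * z = ((q : ℂ) ^ (2 * k)) • (1 : A) - ((q : ℂ) ^ 2) • a) :
    spectrum ℂ a ⊆ {x : ℂ | ∃ m : ℕ, k ≤ m ∧ x = (q : ℂ) ^ (2 * m)} ∪ {0} := by
  intro μ hμ
  rcases eq_or_ne μ 0 with rfl | hμ0
  · exact Or.inr rfl
  have hq2 : (q : ℂ) ^ 2 ≠ 0 := pow_ne_zero 2 (Complex.ofReal_ne_zero.mpr hq.1.ne')
  have hq2_lt : ‖(q : ℂ) ^ 2‖ < 1 := by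
    rw [norm_pow, Complex.norm_real, Real.norm_of_nonneg hq.1.le]
    exact pow_lt_one₀ hq.1.le hq.2 two_ne_zero
  obtain ⟨n, rfl⟩ := exists_eq_mul_pow_of_forall_div_mem (spectrum.isBounded a) hq2 hq2_lt
    (fun ν hν hνc => spectrum.div_mem_of_mul_eq_of_mul_eq h1 h2 hq2 hν hνc) hμ hμ0
  exact Or.inl ⟨k + n, Nat.le_add_right k n, by ring⟩

/-- Let `q ∈ (0,1)`, `k ∈ ℕ`, and let `a, z` be elements of a unital
C*-algebra with `a` positive (selfadjoint with spectrum in `[0,∞)`) such that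
`z z* = q^{2k}·1 − a` and `z* z = q^{2k}·1 − q²·a`. Then
`Sp(a) ⊆ {q^{2m} : m ∈ ℕ, m ≥ k} ∪ {0}`. -/
theorem spectrum_subset_of_sphere_relations
    {A : Type*} [NormedRing A] [StarRing A] [CStarRing A] [NormedAlgebra ℂ A]
    [CompleteSpace A] [StarModule ℂ A]
    (q : ℝ) (hq : q ∈ Set.Ioo (0 : ℝ) 1) (k : ℕ) (a z : A)
    (ha : IsSelfAdjoint a)
    (haspec : spectrum ℂ a ⊆ {x : ℂ | ∃ r : ℝ, 0 ≤ r ∧ x = (r : ℂ)})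
    (h1 : z * star z = ((q : ℂ) ^ (2 * k)) • (1 : A) - a)
    (h2 : star z * z = ((q : ℂ) ^ (2 * k)) • (1 : A) - ((q : ℂ) ^ 2) • a) :
    spectrum ℂ a ⊆ {x : ℂ | ∃ m : ℕ, k ≤ m ∧ x = (q : ℂ) ^ (2 * m)} ∪ {0} :=
  spectrum_subset_of_sphere_relations_general q hq k a z h1 h2
end
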